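/- Let v = s_1 ∘ s_2 ∘ ⋯ ∘ s_n (rightmost factor applied first), and let u be an element of the subgroup of the orthogonal group of ℝ^n generated by {s_j : j ≠ 1} such that u(α_j) is a negative root for every j ≠ 1. Then v(α_{n−1}) = α_1 + α_2 + ⋯ + α_n and u(v(α_{n−1})) = α_1 + α_2 + ⋯ + α_{n−1}. -/

import Mathlib

open scoped InnerProductSpace

private lemma sRefl_invol {V : Type*} [NormedAddCommGroup V] [InnerProductSpace ℝ V]
    (b x : V) :
    (x - (2 * ⟪x, b⟫_ℝ / ⟪b, b⟫_ℝ) • b) -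
      (2 * ⟪x - (2 * ⟪x, b⟫_ℝ / ⟪b, b⟫_ℝ) • b, b⟫_ℝ / ⟪b, b⟫_ℝ) • b = x := by
  by_cases hb : b = 0
  · simp [hb]
  · have h : ⟪b, b⟫_ℝ ≠ 0 := fun h => hb (inner_self_eq_zero.mp h)
    have key : 2 * ⟪x - (2 * ⟪x, b⟫_ℝ / ⟪b, b⟫_ℝ) • b, b⟫_ℝ / ⟪b, b⟫_ℝ
        = -(2 * ⟪x, b⟫_ℝ / ⟪b, b⟫_ℝ) := by
      rw [inner_sub_left, real_inner_smul_left]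
      field_simp
      ring
    rw [key, neg_smul, sub_neg_eq_add, sub_add_cancel]

/-- The reflection `s_b : x ↦ x - (2⟪x,b⟫/⟪b,b⟫) • b`, as a permutation of `V`. -/
noncomputable def sRefl {V : Type*} [NormedAddCommGroup V] [InnerProductSpace ℝ V]
    (b : V) : Equiv.Perm V where
  toFun x := x - (2 * ⟪x, b⟫_ℝ / ⟪b, b⟫_ℝ) • b
  invFun x := x - (2 * ⟪x, b⟫_ℝ / ⟪b, b⟫_ℝ) • b
  left_inv x := sRefl_invol b x
  right_inv x := sRefl_invol b x

/-- `E n i` is the `i`-th standard basis vector of `ℝ^n` (for indices `1 ≤ i ≤ n`). -/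
noncomputable def E (n i : ℕ) : EuclideanSpace ℝ (Fin n) :=
  if h : 1 ≤ i ∧ i ≤ n then EuclideanSpace.single (⟨i - 1, by omega⟩ : Fin n) 1 else 0

/-- The simple roots of type `Cₙ` (indexed by `1 ≤ i ≤ n`):
`αᵢ = eᵢ - eᵢ₊₁` for `i ≤ n - 1` and `αₙ = 2eₙ`. -/
noncomputable def alphaC (n i : ℕ) : EuclideanSpace ℝ (Fin n) :=
  if i = n then (2 : ℝ) • E n n else E n i - E n (i + 1)

/-- The roots of type `Cₙ`: `±eᵢ ± eⱼ` (`1 ≤ i < j ≤ n`) and `±2eᵢ` (`1 ≤ i ≤ n`). -/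
def RootC (n : ℕ) : Set (EuclideanSpace ℝ (Fin n)) :=
  {x | (∃ i j, 1 ≤ i ∧ i < j ∧ j ≤ n ∧
      (x = E n i + E n j ∨ x = -(E n i + E n j) ∨ x = E n i - E n j ∨ x = E n j - E n i)) ∨
    (∃ i, 1 ≤ i ∧ i ≤ n ∧ (x = (2 : ℝ) • E n i ∨ x = -((2 : ℝ) • E n i)))}

/-- A positive root of type `Cₙ`: a root which is a nonnegative integer combination of
the simple roots. -/
def IsPosC (n : ℕ) (x : EuclideanSpace ℝ (Fin n)) : Prop :=
  x ∈ RootC n ∧ ∃ c : ℕ → ℕ, x = ∑ i ∈ Finset.Icc 1 n, (c i : ℝ) • alphaC n i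

/-- A negative root of type `Cₙ`: the negative of a positive root. -/
def IsNegC (n : ℕ) (x : EuclideanSpace ℝ (Fin n)) : Prop :=
  IsPosC n (-x)

/-- The simple reflections `sᵢ = s_{αᵢ}` of type `Cₙ`. -/
noncomputable def sC (n i : ℕ) : Equiv.Perm (EuclideanSpace ℝ (Fin n)) :=
  sRefl (alphaC n i)

/-- `v = s₁ ∘ s₂ ∘ ⋯ ∘ sₙ` (rightmost factor applied first);
recall that in `Equiv.Perm` the product `f * g` is the composition `f ∘ g`. -/
noncomputable def vC (n : ℕ) : Equiv.Perm (EuclideanSpace ℝ (Fin n)) :=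
  ((List.range n).map fun k => sC n (k + 1)).prod

-- infrastructure
lemma E_def (n i : ℕ) (h1 : 1 ≤ i) (h2 : i ≤ n) :
    E n i = EuclideanSpace.single (⟨i - 1, by omega⟩ : Fin n) 1 := by
  rw [E, dif_pos ⟨h1, h2⟩]

lemma inner_E_E (n i j : ℕ) (hi1 : 1 ≤ i) (hi2 : i ≤ n) (hj1 : 1 ≤ j) (hj2 : j ≤ n) :
    ⟪E n i, E n j⟫_ℝ = if i = j then 1 else 0 := by
  rw [E_def n i hi1 hi2, E_def n j hj1 hj2, EuclideanSpace.inner_single_left]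
  simp only [EuclideanSpace.single_apply, map_one, one_mul]
  by_cases h : i = j
  · simp [h]
  · rw [if_neg, if_neg h]
    simp only [Fin.mk.injEq]
    omega

lemma inner_E_same (n i : ℕ) (h1 : 1 ≤ i) (h2 : i ≤ n) : ⟪E n i, E n i⟫_ℝ = 1 := by
  rw [inner_E_E n i i h1 h2 h1 h2, if_pos rfl]

lemma inner_E_ne (n i j : ℕ) (hi1 : 1 ≤ i) (hi2 : i ≤ n) (hj1 : 1 ≤ j) (hj2 : j ≤ n)
    (h : i ≠ j) : ⟪E n i, E n j⟫_ℝ = 0 := by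
  rw [inner_E_E n i j hi1 hi2 hj1 hj2, if_neg h]

noncomputable def phiC (n : ℕ) : EuclideanSpace ℝ (Fin n) := WithLp.toLp 2 (fun t : Fin n => ((n - t.val : ℕ) : ℝ))

lemma inner_phi_E (n i : ℕ) (hi1 : 1 ≤ i) (hi2 : i ≤ n) :
    ⟪phiC n, E n i⟫_ℝ = ((n + 1 - i : ℕ) : ℝ) := by
  rw [E_def n i hi1 hi2, EuclideanSpace.inner_single_right]
  have : phiC n (⟨i - 1, by omega⟩ : Fin n) = ((n - (i - 1) : ℕ) : ℝ) := rfl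
  rw [one_mul, starRingEnd_apply, star_trivial, this]
  congr 1
  omega

lemma inner_phi_E_pos (n i : ℕ) (hi1 : 1 ≤ i) (hi2 : i ≤ n) :
    (1 : ℝ) ≤ ⟪phiC n, E n i⟫_ℝ := by
  rw [inner_phi_E n i hi1 hi2]
  exact_mod_cast Nat.one_le_iff_ne_zero.mpr (by omega)

lemma inner_phi_alpha_nonneg (n k : ℕ) (h1 : 1 ≤ k) (h2 : k ≤ n) :
    0 ≤ ⟪phiC n, alphaC n k⟫_ℝ := by
  rw [alphaC]
  by_cases h : k = n
  · rw [if_pos h, real_inner_smul_right]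
    nlinarith [inner_phi_E_pos n n (by omega) le_rfl]
  · rw [if_neg h, inner_sub_right, inner_phi_E n k h1 h2, inner_phi_E n (k+1) (by omega) (by omega)]
    have : n + 1 - (k+1) ≤ n + 1 - k := by omega
    have := (Nat.cast_le (α := ℝ)).mpr this
    linarith

lemma negC_classify (n : ℕ) (x : EuclideanSpace ℝ (Fin n)) (hx : IsNegC n x)
    (h1 : ⟪E n 1, x⟫_ℝ = 0) (hn : 1 ≤ n) :
    (∃ a b, 2 ≤ a ∧ a < b ∧ b ≤ n ∧ (x = -(E n a + E n b) ∨ x = E n b - E n a)) ∨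
    (∃ a, 2 ≤ a ∧ a ≤ n ∧ x = -((2 : ℝ) • E n a)) := by
  obtain ⟨hroot, c, hc⟩ := hx
  have hphi : 0 ≤ ⟪phiC n, -x⟫_ℝ := by
    rw [hc, inner_sum]
    refine Finset.sum_nonneg fun i hi => ?_
    rw [real_inner_smul_right]
    rcases Finset.mem_Icc.mp hi with ⟨hi1, hi2⟩
    exact mul_nonneg (Nat.cast_nonneg _) (inner_phi_alpha_nonneg n i hi1 hi2)
  rw [inner_neg_right] at hphi
  have hphi' : ⟪phiC n, x⟫_ℝ ≤ 0 := by linarith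
  rcases hroot with ⟨i, j, hi1, hij, hjn, hcase⟩ | ⟨i, hi1, hin, hcase⟩
  · have hi2 : i ≤ n := by omega
    have hj1 : 1 ≤ j := by omega
    have pi := inner_phi_E n i hi1 hi2
    have pj := inner_phi_E n j hj1 hjn
    rcases hcase with h | h | h | h
    · -- -x = Ei + Ej, x = -(Ei+Ej)
      have hx' : x = -(E n i + E n j) := by rw [← h]; abel
      have hi2' : 2 ≤ i := by
        rcases Nat.lt_or_ge i 2 with hlt | hge
        · exfalso
          have : i = 1 := by omega
          subst this
          rw [hx', inner_neg_right, inner_add_right, inner_E_same n 1 (by omega) hn,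
            inner_E_ne n 1 j (by omega) hn hj1 hjn (by omega)] at h1
          norm_num at h1
        · exact hge
      exact Or.inl ⟨i, j, hi2', hij, hjn, Or.inl hx'⟩
    · -- -x = -(Ei+Ej), x = Ei + Ej : contradict phi
      have hx' : x = E n i + E n j := by
        have := congrArg Neg.neg h; rwa [neg_neg, neg_neg] at this
      exfalso
      rw [hx', inner_add_right] at hphi'
      have := inner_phi_E_pos n i hi1 hi2
      have := inner_phi_E_pos n j hj1 hjn
      linarith
    · -- -x = Ei - Ej, x = Ej - Ei : keeper
      have hx' : x = E n j - E n i := by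
        have := congrArg Neg.neg h; rwa [neg_neg, neg_sub] at this
      have hi2' : 2 ≤ i := by
        rcases Nat.lt_or_ge i 2 with hlt | hge
        · exfalso
          have : i = 1 := by omega
          subst this
          rw [hx', inner_sub_right, inner_E_same n 1 (by omega) hn,
            inner_E_ne n 1 j (by omega) hn hj1 hjn (by omega)] at h1
          norm_num at h1
        · exact hge
      exact Or.inl ⟨i, j, hi2', hij, hjn, Or.inr hx'⟩
    · -- -x = Ej - Ei, x = Ei - Ej : contradict phi
      have hx' : x = E n i - E n j := by
        have := congrArg Neg.neg h; rwa [neg_neg, neg_sub] at this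
      exfalso
      rw [hx', inner_sub_right, pi, pj] at hphi'
      have : n + 1 - j < n + 1 - i := by omega
      have := (Nat.cast_lt (α := ℝ)).mpr this
      linarith
  · have pi := inner_phi_E n i hi1 hin
    rcases hcase with h | h
    · -- -x = 2Ei, x = -(2Ei)
      have hx' : x = -((2:ℝ) • E n i) := by rw [← h]; abel
      have hi2' : 2 ≤ i := by
        rcases Nat.lt_or_ge i 2 with hlt | hge
        · exfalso
          have : i = 1 := by omega
          subst this
          rw [hx', inner_neg_right, real_inner_smul_right,
            inner_E_same n 1 (by omega) hn] at h1
          norm_num at h1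
        · exact hge
      exact Or.inr ⟨i, hi2', hin, hx'⟩
    · -- x = 2Ei : contradict phi
      have hx' : x = (2:ℝ) • E n i := by
        have := congrArg Neg.neg h; rwa [neg_neg, neg_neg] at this
      exfalso
      rw [hx', real_inner_smul_right] at hphi'
      have := inner_phi_E_pos n i hi1 hin
      linarith
-- sRefl properties
lemma sRefl_apply {V : Type*} [NormedAddCommGroup V] [InnerProductSpace ℝ V] (b x : V) :
    sRefl b x = x - (2 * ⟪x, b⟫_ℝ / ⟪b, b⟫_ℝ) • b := rfl

lemma sRefl_add {V : Type*} [NormedAddCommGroup V] [InnerProductSpace ℝ V] (b x y : V) :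
    sRefl b (x + y) = sRefl b x + sRefl b y := by
  simp only [sRefl_apply, inner_add_left]
  rw [show 2 * (⟪x, b⟫_ℝ + ⟪y, b⟫_ℝ) / ⟪b, b⟫_ℝ
      = 2 * ⟪x, b⟫_ℝ / ⟪b, b⟫_ℝ + 2 * ⟪y, b⟫_ℝ / ⟪b, b⟫_ℝ by ring, add_smul]
  abel

lemma sRefl_smul {V : Type*} [NormedAddCommGroup V] [InnerProductSpace ℝ V] (b : V) (c : ℝ)
    (x : V) : sRefl b (c • x) = c • sRefl b x := by
  simp only [sRefl_apply, real_inner_smul_left, smul_sub, smul_smul]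
  congr 1
  congr 1
  ring

lemma sRefl_inner {V : Type*} [NormedAddCommGroup V] [InnerProductSpace ℝ V] (b x y : V) :
    ⟪sRefl b x, sRefl b y⟫_ℝ = ⟪x, y⟫_ℝ := by
  by_cases hb : b = 0
  · simp [sRefl_apply, hb]
  · have hB : ⟪b, b⟫_ℝ ≠ 0 := fun h => hb (inner_self_eq_zero.mp h)
    simp only [sRefl_apply, inner_sub_left, inner_sub_right, real_inner_smul_left,
      real_inner_smul_right]
    field_simp
    rw [real_inner_comm b y]
    ring

lemma sRefl_fixed {V : Type*} [NormedAddCommGroup V] [InnerProductSpace ℝ V] (b x : V)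
    (h : ⟪x, b⟫_ℝ = 0) : sRefl b x = x := by
  simp [sRefl_apply, h]

-- properties of elements of the parabolic subgroup
lemma u_props (n : ℕ) (hn : 3 ≤ n) (u : Equiv.Perm (EuclideanSpace ℝ (Fin n)))
    (hu : u ∈ Subgroup.closure {g | ∃ j, 1 ≤ j ∧ j ≤ n ∧ j ≠ 1 ∧ g = sC n j}) :
    (∀ x y, u (x + y) = u x + u y) ∧ (∀ (c : ℝ) x, u (c • x) = c • u x) ∧
    (∀ x y, ⟪u x, u y⟫_ℝ = ⟪x, y⟫_ℝ) ∧ u (E n 1) = E n 1 := by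
  induction hu using Subgroup.closure_induction with
  | mem g hg =>
    obtain ⟨j, hj1, hjn, hjne, rfl⟩ := hg
    have hfix : ⟪E n 1, alphaC n j⟫_ℝ = 0 := by
      rw [alphaC]
      by_cases h : j = n
      · rw [if_pos h, real_inner_smul_right, inner_E_ne n 1 n (by omega) (by omega) (by omega)
          le_rfl (by omega)]
        ring
      · rw [if_neg h, inner_sub_right,
          inner_E_ne n 1 j (by omega) (by omega) (by omega) (by omega) (by omega),
          inner_E_ne n 1 (j+1) (by omega) (by omega) (by omega) (by omega) (by omega)]
        ring
    exact ⟨sRefl_add _, sRefl_smul _, sRefl_inner _, sRefl_fixed _ _ hfix⟩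
  | one => exact ⟨fun x y => rfl, fun c x => rfl, fun x y => rfl, rfl⟩
  | mul g h _ _ hg hh =>
    refine ⟨fun x y => ?_, fun c x => ?_, fun x y => ?_, ?_⟩
    · simp only [Equiv.Perm.mul_apply, hh.1, hg.1]
    · simp only [Equiv.Perm.mul_apply, hh.2.1, hg.2.1]
    · simp only [Equiv.Perm.mul_apply, hh.2.2.1, hg.2.2.1]
    · simp only [Equiv.Perm.mul_apply, hh.2.2.2, hg.2.2.2]
  | inv g _ hg =>
    obtain ⟨ha, hs, hi, hf⟩ := hg
    have key : ∀ x, g⁻¹ (g x) = x := fun x => g.symm_apply_apply x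
    have key2 : ∀ x, g (g⁻¹ x) = x := fun x => g.apply_symm_apply x
    refine ⟨fun x y => ?_, fun c x => ?_, fun x y => ?_, ?_⟩
    · apply g.injective
      rw [key2, ha, key2, key2]
    · apply g.injective
      rw [key2, hs, key2]
    · rw [← hi (g⁻¹ x) (g⁻¹ y), key2, key2]
    · apply g.injective
      rw [key2, hf]

-- alpha computations
lemma alpha_lt (n j : ℕ) (h : j ≠ n) : alphaC n j = E n j - E n (j + 1) := if_neg h

lemma alpha_top (n : ℕ) : alphaC n n = (2 : ℝ) • E n n := if_pos rfl

lemma inner_alpha_self_short (n j : ℕ) (h1 : 1 ≤ j) (h2 : j + 1 ≤ n) :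
    ⟪alphaC n j, alphaC n j⟫_ℝ = 2 := by
  rw [alpha_lt n j (by omega)]
  simp (disch := omega) only [inner_sub_left, inner_sub_right, inner_E_same, inner_E_ne]
  norm_num

lemma inner_alpha_self_long (n : ℕ) (hn : 1 ≤ n) : ⟪alphaC n n, alphaC n n⟫_ℝ = 4 := by
  rw [alpha_top]
  simp (disch := omega) only [real_inner_smul_left, real_inner_smul_right, inner_E_same]
  norm_num

lemma inner_alpha_succ (n j : ℕ) (h1 : 1 ≤ j) (h2 : j + 2 ≤ n) :
    ⟪alphaC n j, alphaC n (j + 1)⟫_ℝ = -1 := by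
  rw [alpha_lt n j (by omega), alpha_lt n (j + 1) (by omega)]
  simp (disch := omega) only [inner_sub_left, inner_sub_right, inner_E_same, inner_E_ne]
  norm_num

lemma inner_alpha_top_pred (n j : ℕ) (h1 : 1 ≤ j) (h2 : j + 1 = n) :
    ⟪alphaC n j, alphaC n n⟫_ℝ = -2 := by
  subst h2
  rw [alpha_lt (j+1) j (by omega), alpha_top]
  simp (disch := omega) only [inner_sub_left, inner_sub_right, real_inner_smul_right,
    inner_E_same, inner_E_ne]
  norm_num

lemma inner_alpha_top_far (n j : ℕ) (h1 : 1 ≤ j) (h2 : j + 2 ≤ n) :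
    ⟪alphaC n j, alphaC n n⟫_ℝ = 0 := by
  rw [alpha_lt n j (by omega), alpha_top]
  simp (disch := omega) only [inner_sub_left, inner_sub_right, real_inner_smul_right,
    inner_E_same, inner_E_ne]
  norm_num

lemma inner_alpha_far (n j k : ℕ) (h1 : 1 ≤ j) (h2 : j + 2 ≤ k) (h3 : k + 1 ≤ n) :
    ⟪alphaC n j, alphaC n k⟫_ℝ = 0 := by
  rw [alpha_lt n j (by omega), alpha_lt n k (by omega)]
  simp (disch := omega) only [inner_sub_left, inner_sub_right, inner_E_same, inner_E_ne]
  norm_num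

lemma inner_E1_alpha (n j : ℕ) (hn : 3 ≤ n) (h2 : 2 ≤ j) (hjn : j ≤ n) :
    ⟪E n 1, alphaC n j⟫_ℝ = 0 := by
  rw [alphaC]
  by_cases h : j = n
  · rw [if_pos h, real_inner_smul_right,
      inner_E_ne n 1 n (by omega) (by omega) (by omega) le_rfl (by omega)]
    ring
  · rw [if_neg h, inner_sub_right,
      inner_E_ne n 1 j (by omega) (by omega) (by omega) (by omega) (by omega),
      inner_E_ne n 1 (j+1) (by omega) (by omega) (by omega) (by omega) (by omega)]
    ring

-- the chain argument
lemma u_alpha_top (n : ℕ) (hn : 3 ≤ n) (u : Equiv.Perm (EuclideanSpace ℝ (Fin n)))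
    (hinner : ∀ x y, ⟪u x, u y⟫_ℝ = ⟪x, y⟫_ℝ) (hfix : u (E n 1) = E n 1)
    (hneg : ∀ j, 1 ≤ j → j ≤ n → j ≠ 1 → IsNegC n (u (alphaC n j))) :
    u (alphaC n n) = -((2 : ℝ) • E n n) := by
  have h1 : ∀ j, 2 ≤ j → j ≤ n → ⟪E n 1, u (alphaC n j)⟫_ℝ = 0 := by
    intro j hj2 hjn
    rw [← hfix, hinner]
    exact inner_E1_alpha n j hn hj2 hjn
  have hP : ∀ k, k ≤ n - 2 → ∃ b : ℕ → ℕ,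
      (∀ i, i ≤ k → 2 ≤ b i ∧ b i ≤ n) ∧ (∀ i, i + 1 ≤ k → b (i + 1) < b i) ∧
      u (alphaC n n) = -((2 : ℝ) • E n (b 0)) ∧
      (∀ i, 1 ≤ i → i ≤ k → u (alphaC n (n - i)) = E n (b (i - 1)) - E n (b i)) := by
    intro k
    induction k with
    | zero =>
      intro _
      have hx := hneg n (by omega) le_rfl (by omega)
      have hnorm : ⟪u (alphaC n n), u (alphaC n n)⟫_ℝ = 4 := by
        rw [hinner]; exact inner_alpha_self_long n (by omega)
      rcases negC_classify n _ hx (h1 n (by omega) le_rfl) (by omega) with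
        ⟨a, b, ha2, hab, hbn, hcase⟩ | ⟨a, ha2, han, hx'⟩
      · exfalso
        rcases hcase with hx' | hx' <;>
        · rw [hx'] at hnorm
          simp (disch := omega) only [inner_neg_left, inner_neg_right, inner_add_left,
            inner_add_right, inner_sub_left, inner_sub_right, inner_E_same, inner_E_ne] at hnorm
          norm_num at hnorm
      · exact ⟨fun _ => a, fun i _ => ⟨ha2, han⟩, fun i hi => by omega, by rw [hx'],
          fun i hi1 hi2 => by omega⟩
    | succ k ih =>
      intro hk1
      obtain ⟨b, hrange, hdec, htop, hform⟩ := ih (by omega)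
      set j := n - (k + 1) with hj
      have hj2 : 2 ≤ j := by omega
      have hjn : j + 1 ≤ n := by omega
      set x := u (alphaC n j) with hxdef
      have hx := hneg j (by omega) (by omega) (by omega)
      have hnorm : ⟪x, x⟫_ℝ = 2 := by
        rw [hxdef, hinner]; exact inner_alpha_self_short n j (by omega) hjn
      have hkey : ⟪x, E n (b k)⟫_ℝ = 1 := by
        rcases Nat.eq_zero_or_pos k with rfl | hkpos
        · -- k = 0 : j = n - 1
          have hrel : ⟪x, u (alphaC n n)⟫_ℝ = -2 := by
            rw [hxdef, hinner]
            exact inner_alpha_top_pred n j (by omega) (by omega)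
          rw [htop, inner_neg_right, real_inner_smul_right] at hrel
          linarith
        · -- k ≥ 1
          have hQ : ∀ i, i ≤ k - 1 → ⟪x, E n (b i)⟫_ℝ = 0 := by
            intro i
            induction i with
            | zero =>
              intro _
              have hrel : ⟪x, u (alphaC n n)⟫_ℝ = 0 := by
                rw [hxdef, hinner]
                exact inner_alpha_top_far n j (by omega) (by omega)
              rw [htop, inner_neg_right, real_inner_smul_right] at hrel
              linarith
            | succ i ihQ =>
              intro hik
              have hprev := ihQ (by omega)
              have hrel : ⟪x, u (alphaC n (n - (i + 1)))⟫_ℝ = 0 := by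
                rw [hxdef, hinner]
                exact inner_alpha_far n j (n - (i + 1)) (by omega) (by omega) (by omega)
              rw [hform (i + 1) (by omega) (by omega)] at hrel
              rw [inner_sub_right] at hrel
              simp only [Nat.add_sub_cancel] at hrel
              rw [hprev] at hrel
              linarith
          have hrel : ⟪x, u (alphaC n (n - k))⟫_ℝ = -1 := by
            rw [hxdef, hinner]
            have heq : n - k = j + 1 := by omega
            rw [heq]
            exact inner_alpha_succ n j (by omega) (by omega)
          rw [hform k (by omega) (by omega), inner_sub_right,
            hQ (k - 1) le_rfl] at hrel
          linarith
      rcases negC_classify n x hx (h1 j (by omega) (by omega)) (by omega) with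
        ⟨a, b', ha2, hab, hbn, hcase⟩ | ⟨a, ha2, han, hx'⟩
      · have hbk := hrange k le_rfl
        rcases hcase with hx' | hx'
        · exfalso
          rw [hx', inner_neg_left, inner_add_left,
            inner_E_E n a (b k) (by omega) (by omega) (by omega) (by omega),
            inner_E_E n b' (b k) (by omega) (by omega) (by omega) (by omega)] at hkey
          split_ifs at hkey <;> norm_num at hkey
        · -- x = E b' - E a ; conclude b' = b k
          have hb' : b' = b k := by
            by_contra hne
            rw [hx', inner_sub_left,
              inner_E_E n b' (b k) (by omega) (by omega) (by omega) (by omega),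
              inner_E_E n a (b k) (by omega) (by omega) (by omega) (by omega),
              if_neg hne] at hkey
            split_ifs at hkey <;> norm_num at hkey
          subst hb'
          refine ⟨fun i => if i = k + 1 then a else b i, fun i hi => ?_, fun i hi => ?_,
            ?_, fun i hi1 hi2 => ?_⟩ <;> dsimp only
          · by_cases h : i = k + 1
            · rw [if_pos h]; exact ⟨ha2, by omega⟩
            · rw [if_neg h]; exact hrange i (by omega)
          · by_cases h : i + 1 = k + 1
            · have hik : i = k := by omega
              subst hik
              rw [if_pos rfl, if_neg (show i ≠ i + 1 by omega)]
              exact hab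
            · rw [if_neg h, if_neg (show i ≠ k + 1 by omega)]
              exact hdec i (by omega)
          · rw [if_neg (show 0 ≠ k + 1 by omega)]; exact htop
          · by_cases h : i = k + 1
            · subst h
              simp only [Nat.add_sub_cancel]
              rw [if_neg (show k ≠ k + 1 by omega), if_pos trivial]
              exact hx'
            · rw [if_neg h, if_neg (show i - 1 ≠ k + 1 by omega)]
              exact hform i hi1 (by omega)
      · exfalso
        rw [hx'] at hnorm
        simp (disch := omega) only [inner_neg_left, inner_neg_right, real_inner_smul_left,
          real_inner_smul_right, inner_E_same] at hnorm
        norm_num at hnorm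
  obtain ⟨b, hrange, hdec, htop, _⟩ := hP (n - 2) le_rfl
  have hmono : ∀ i, i ≤ n - 2 → b i + i ≤ b 0 := by
    intro i
    induction i with
    | zero => intro _; omega
    | succ i ih =>
      intro hi
      have := hdec i (by omega)
      have := ih (by omega)
      omega
  have hb0 : b 0 = n := by
    have := hmono (n - 2) le_rfl
    have := hrange (n - 2) le_rfl
    have := hrange 0 (by omega)
    omega
  rw [htop, hb0]

-- partial products of vC
noncomputable def vPart (n k : ℕ) : Equiv.Perm (EuclideanSpace ℝ (Fin n)) :=
  ((List.range k).map fun i => sC n (i + 1)).prod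

lemma vPart_succ (n k : ℕ) : vPart n (k + 1) = vPart n k * sC n (k + 1) := by
  rw [vPart, List.range_succ, List.map_append, List.prod_append]
  simp [vPart]

lemma sC_swap_down (n k : ℕ) (h1 : 1 ≤ k) (h2 : k + 2 ≤ n) :
    sC n k (E n (k + 1) + E n n) = E n k + E n n := by
  have hxb : ⟪E n (k + 1) + E n n, E n k - E n (k + 1)⟫_ℝ = -1 := by
    simp (disch := omega) only [inner_add_left, inner_sub_right, inner_E_same, inner_E_ne]
    norm_num
  have hbb : ⟪E n k - E n (k + 1), E n k - E n (k + 1)⟫_ℝ = 2 := by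
    simp (disch := omega) only [inner_sub_left, inner_sub_right, inner_E_same, inner_E_ne]
    norm_num
  rw [sC, alpha_lt n k (by omega), sRefl_apply, hxb, hbb]
  norm_num
  abel

lemma sC_top_apply (n : ℕ) (hn : 3 ≤ n) :
    sC n n (E n (n - 1) - E n n) = E n (n - 1) + E n n := by
  have hxb : ⟪E n (n - 1) - E n n, (2 : ℝ) • E n n⟫_ℝ = -2 := by
    simp (disch := omega) only [inner_sub_left, real_inner_smul_right, inner_E_same, inner_E_ne]
    norm_num
  have hbb : ⟪(2 : ℝ) • E n n, (2 : ℝ) • E n n⟫_ℝ = 4 := by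
    simp (disch := omega) only [real_inner_smul_left, real_inner_smul_right, inner_E_same]
    norm_num
  rw [sC, alpha_top, sRefl_apply, hxb, hbb]
  norm_num
  rw [two_smul]
  abel

lemma sC_fix_pred (n : ℕ) (hn : 3 ≤ n) :
    sC n (n - 1) (E n (n - 1) + E n n) = E n (n - 1) + E n n := by
  apply sRefl_fixed
  rw [alpha_lt n (n - 1) (by omega), show n - 1 + 1 = n by omega]
  simp (disch := omega) only [inner_add_left, inner_sub_right, inner_E_same, inner_E_ne]
  norm_num

lemma vPart_chain (n : ℕ) (hn : 3 ≤ n) :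
    ∀ k, k ≤ n - 2 → vPart n k (E n (k + 1) + E n n) = E n 1 + E n n := by
  intro k
  induction k with
  | zero =>
    intro _
    rw [vPart]
    simp
  | succ k ih =>
    intro hk
    rw [vPart_succ, Equiv.Perm.mul_apply, sC_swap_down n (k + 1) (by omega) (by omega)]
    exact ih (by omega)

lemma vC_val (n : ℕ) (hn : 3 ≤ n) : vC n (alphaC n (n - 1)) = E n 1 + E n n := by
  have e1 : vC n = vPart n (n - 2) * sC n (n - 1) * sC n n := by
    have h1 : vC n = vPart n n := rfl
    rw [h1, show n = (n - 2) + 1 + 1 by omega, vPart_succ, vPart_succ,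
      show n - 2 + 1 = n - 1 by omega, show n - 1 + 1 = n by omega]
  rw [e1, Equiv.Perm.mul_apply, Equiv.Perm.mul_apply,
    alpha_lt n (n - 1) (by omega), show n - 1 + 1 = n by omega,
    sC_top_apply n hn, sC_fix_pred n hn,
    show n - 1 = (n - 2) + 1 by omega, vPart_chain n hn (n - 2) le_rfl]

lemma sum_alpha_partial (n m : ℕ) (hn : 3 ≤ n) (h1 : 1 ≤ m) (h2 : m ≤ n - 1) :
    ∑ k ∈ Finset.Icc 1 m, alphaC n k = E n 1 - E n (m + 1) := by
  induction m with
  | zero => omega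
  | succ m ih =>
    rcases Nat.eq_zero_or_pos m with rfl | hm
    · rw [Finset.Icc_self, Finset.sum_singleton, alpha_lt n 1 (by omega)]
    · rw [Finset.sum_Icc_succ_top (by omega), ih (by omega) (by omega),
        alpha_lt n (m + 1) (by omega)]
      abel

lemma sum_alpha_all (n : ℕ) (hn : 3 ≤ n) :
    ∑ k ∈ Finset.Icc 1 n, alphaC n k = E n 1 + E n n := by
  have key : ∑ k ∈ Finset.Icc 1 (n - 1 + 1), alphaC n k
      = ∑ k ∈ Finset.Icc 1 (n - 1), alphaC n k + alphaC n (n - 1 + 1) :=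
    Finset.sum_Icc_succ_top (by omega) _
  rw [show n - 1 + 1 = n by omega] at key
  rw [key, sum_alpha_partial n (n - 1) hn (by omega) (by omega),
    show n - 1 + 1 = n by omega, alpha_top, two_smul]
  abel

/-- Type `Cₙ` (`n ≥ 3`): let `v = s₁ ∘ s₂ ∘ ⋯ ∘ sₙ` and let `u` be the longest element of
the parabolic Weyl group generated by `{sⱼ : j ≠ 1}`.  Then `v(αₙ₋₁) = α₁ + ⋯ + αₙ` and
`u(v(αₙ₋₁)) = α₁ + ⋯ + αₙ₋₁`. -/
theorem stmt_12 (n : ℕ) (hn : 3 ≤ n)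
    (u : Equiv.Perm (EuclideanSpace ℝ (Fin n)))
    (hu : u ∈ Subgroup.closure {g | ∃ j, 1 ≤ j ∧ j ≤ n ∧ j ≠ 1 ∧ g = sC n j})
    (hneg : ∀ j, 1 ≤ j → j ≤ n → j ≠ 1 → IsNegC n (u (alphaC n j))) :
    vC n (alphaC n (n - 1)) = ∑ k ∈ Finset.Icc 1 n, alphaC n k ∧
    u (vC n (alphaC n (n - 1))) = ∑ k ∈ Finset.Icc 1 (n - 1), alphaC n k := by
  obtain ⟨hadd, hsmul, hinner, hfix⟩ := u_props n hn u hu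
  have hv := vC_val n hn
  have hutop := u_alpha_top n hn u hinner hfix hneg
  constructor
  · rw [hv, sum_alpha_all n hn]
  · rw [hv, hadd, hfix]
    have hEn : u (E n n) = -E n n := by
      have h2 : (2 : ℝ) • u (E n n) = (2 : ℝ) • (-E n n) := by
        rw [← hsmul, ← alpha_top, hutop, smul_neg]
      exact smul_right_injective (EuclideanSpace ℝ (Fin n)) (by norm_num : (2:ℝ) ≠ 0) h2
    rw [hEn, sum_alpha_partial n (n - 1) hn (by omega) (by omega),
      show n - 1 + 1 = n by omega]
    abel
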